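/- Let X and β be finite index types, let p and p̃ be probability distributions on X, let (ρ^x)_{x∈X} and (ρ̃^x)_{x∈X} be families of density matrices on β, let λ be a predicate on X, and let τ be a density matrix on X (a positive semidefinite matrix of trace 1 indexed by X). Write ρ_XB = ∑_{x∈X} p_x · E_{xx} ⊗ ρ^x and ρ̃_XB = ∑_{x∈X} p̃_x · E_{xx} ⊗ ρ̃^x, where E_{xx} is the matrix unit |x⟩⟨x| over X. Then (1/2)·‖∑_{x : λ(x)} p_x · E_{xx} ⊗ ρ^x − τ ⊗ (∑_{x : λ(x)} p_x · ρ^x)‖₁ ≤ 5·Δ(ρ_XB, ρ̃_XB) + (1/2)·‖∑_{x : λ(x)} p̃_x · E_{xx} ⊗ ρ̃^x − τ ⊗ (∑_{x : λ(x)} p̃_x · ρ̃^x)‖₁. -/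

import Mathlib

open Matrix ComplexOrder Kronecker

/-- The trace norm `‖M‖₁ = tr √(MᴴM)` of a square complex matrix. -/
noncomputable def traceNorm {ι : Type*} [Fintype ι] [DecidableEq ι] (M : Matrix ι ι ℂ) : ℝ :=
  ((Matrix.posSemidef_conjTranspose_mul_self M).isHermitian.eigenvectorUnitary.1 *
    diagonal (((↑) : ℝ → ℂ) ∘ (√·) ∘ (Matrix.posSemidef_conjTranspose_mul_self M).isHermitian.eigenvalues) *
    (star (Matrix.posSemidef_conjTranspose_mul_self M).isHermitian.eigenvectorUnitary :
      Matrix ι ι ℂ)).trace.re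

/-- The trace distance `Δ(ρ,σ) = (1/2)·‖ρ − σ‖₁`. -/
noncomputable def traceDist {ι : Type*} [Fintype ι] [DecidableEq ι]
    (ρ σ : Matrix ι ι ℂ) : ℝ :=
  (1 / 2) * traceNorm (ρ - σ)

open scoped MatrixOrder

section basic
variable {ι : Type*} [Fintype ι] [DecidableEq ι]

lemma traceNorm_eq_sqrt (M : Matrix ι ι ℂ) : traceNorm M = (CFC.sqrt (Mᴴ * M)).trace.re := by
  have hA := Matrix.posSemidef_conjTranspose_mul_self M
  rw [CFC.sqrt_eq_real_sqrt _ hA.nonneg, cfcₙ_eq_cfc, hA.isHermitian.cfc_eq, Matrix.IsHermitian.cfc,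
    Unitary.conjStarAlgAut_apply, traceNorm]
  rfl

lemma sqrt_psd (M : Matrix ι ι ℂ) : (CFC.sqrt (Mᴴ * M)).PosSemidef :=
  Matrix.nonneg_iff_posSemidef.mp (CFC.sqrt_nonneg _)

lemma traceNorm_eq_of_sq {M Q : Matrix ι ι ℂ} (hQ : Q.PosSemidef) (h : Q ^ 2 = Mᴴ * M) :
    traceNorm M = Q.trace.re := by
  rw [traceNorm_eq_sqrt, CFC.sqrt_unique (a := Mᴴ * M) (b := Q) (by rw [← h, pow_two]) hQ.nonneg]

lemma traceNorm_neg (M : Matrix ι ι ℂ) : traceNorm (-M) = traceNorm M := by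
  have h : (CFC.sqrt (Mᴴ * M)) ^ 2 = (-M)ᴴ * (-M) := by
    simp [CFC.sq_sqrt (Mᴴ * M) (Matrix.posSemidef_conjTranspose_mul_self M).nonneg]
  rw [traceNorm_eq_of_sq (sqrt_psd M) h,
    traceNorm_eq_sqrt]

lemma trace_re_nonneg {P : Matrix ι ι ℂ} (hP : P.PosSemidef) : 0 ≤ P.trace.re := by
  rw [Matrix.trace, Complex.re_sum]
  refine Finset.sum_nonneg fun i _ => ?_
  have h0 : (0:ℂ) ≤ (P.diag) i := hP.diag_nonneg
  simpa using (Complex.le_def.mp h0).1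

lemma traceNorm_nonneg (M : Matrix ι ι ℂ) : 0 ≤ traceNorm M :=
  (traceNorm_eq_sqrt M).symm ▸ trace_re_nonneg (sqrt_psd M)

lemma traceNorm_zero : traceNorm (0 : Matrix ι ι ℂ) = 0 := by
  have h : (0 : Matrix ι ι ℂ) ^ 2 = (0 : Matrix ι ι ℂ)ᴴ * 0 := by simp
  rw [traceNorm_eq_of_sq Matrix.PosSemidef.zero h]
  simp

end basic

section herm
variable {ι : Type*} [Fintype ι] [DecidableEq ι] {M : Matrix ι ι ℂ}

lemma my_sandwich (hM : M.IsHermitian) (A B : Matrix ι ι ℂ) :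
    ((hM.eigenvectorUnitary : Matrix ι ι ℂ) * A * star (hM.eigenvectorUnitary : Matrix ι ι ℂ)) *
    ((hM.eigenvectorUnitary : Matrix ι ι ℂ) * B * star (hM.eigenvectorUnitary : Matrix ι ι ℂ)) =
    (hM.eigenvectorUnitary : Matrix ι ι ℂ) * (A * B) * star (hM.eigenvectorUnitary : Matrix ι ι ℂ) := by
  have h : star (hM.eigenvectorUnitary : Matrix ι ι ℂ) * (hM.eigenvectorUnitary : Matrix ι ι ℂ) = 1 :=
    Matrix.mem_unitaryGroup_iff'.mp hM.eigenvectorUnitary.2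
  simp only [Matrix.mul_assoc]
  rw [← Matrix.mul_assoc (star (hM.eigenvectorUnitary : Matrix ι ι ℂ))
    (hM.eigenvectorUnitary : Matrix ι ι ℂ), h, Matrix.one_mul]

lemma traceNorm_hermitian (hM : M.IsHermitian) :
    traceNorm M = ∑ i, |hM.eigenvalues i| := by
  set U := (hM.eigenvectorUnitary : Matrix ι ι ℂ) with hU
  set d : ι → ℂ := fun i => Complex.ofReal |hM.eigenvalues i| with hd
  have hQpsd : (U * Matrix.diagonal d * star U).PosSemidef := by
    rw [Matrix.star_eq_conjTranspose]
    refine (Matrix.posSemidef_diagonal_iff.mpr fun i => ?_).mul_mul_conjTranspose_same U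
    show (0:ℂ) ≤ Complex.ofReal |hM.eigenvalues i|
    exact_mod_cast abs_nonneg _
  have hsq : (U * Matrix.diagonal d * star U) ^ 2 = Mᴴ * M := by
    rw [hM.eq, pow_two, my_sandwich hM, Matrix.diagonal_mul_diagonal]
    conv_rhs => rw [hM.spectral_theorem, Unitary.conjStarAlgAut_apply]
    rw [my_sandwich hM, Matrix.diagonal_mul_diagonal]
    have hfun : (fun i => d i * d i)
        = fun i => (RCLike.ofReal ∘ hM.eigenvalues) i * (RCLike.ofReal ∘ hM.eigenvalues) i := by
      ext i
      show (Complex.ofReal |hM.eigenvalues i|) * (Complex.ofReal |hM.eigenvalues i|) = _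
      rw [← Complex.ofReal_mul, abs_mul_abs_self, Complex.ofReal_mul]
      rfl
    rw [hfun]
  rw [traceNorm_eq_of_sq hQpsd hsq, Matrix.trace_mul_cycle,
    Matrix.mem_unitaryGroup_iff'.mp hM.eigenvectorUnitary.2, Matrix.one_mul,
    Matrix.trace_diagonal, Complex.re_sum]
  simp [hd]

lemma re_trace_mul_le (hM : M.IsHermitian) (C : Matrix ι ι ℂ)
    (hC : ∀ v : ι → ℂ, ‖star v ⬝ᵥ C *ᵥ v‖ ≤ (star v ⬝ᵥ v).re) :
    (C * M).trace.re ≤ traceNorm M := by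
  set U := (hM.eigenvectorUnitary : Matrix ι ι ℂ) with hU
  have hUU : star U * U = 1 := Matrix.mem_unitaryGroup_iff'.mp hM.eigenvectorUnitary.2
  have htr : (C * M).trace = ∑ i, (star U * C * U) i i * (hM.eigenvalues i : ℂ) := by
    conv_lhs => rw [hM.spectral_theorem, Unitary.conjStarAlgAut_apply]
    rw [← Matrix.mul_assoc, ← Matrix.mul_assoc, Matrix.trace_mul_cycle, ← Matrix.mul_assoc,
      Matrix.trace]
    refine Finset.sum_congr rfl fun i _ => ?_
    rw [Matrix.diag_apply, Matrix.mul_diagonal]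
    rfl
  have hdiag : ∀ i, ‖(star U * C * U) i i‖ ≤ 1 := by
    intro i
    set v : ι → ℂ := fun a => U a i with hv
    have h1 : (star U * C * U) i i = star v ⬝ᵥ C *ᵥ v := by
      simp only [Matrix.mul_apply, dotProduct, Matrix.mulVec, Matrix.star_apply,
        Pi.star_apply, hv, Finset.sum_mul]
      rw [Finset.sum_comm]
      refine Finset.sum_congr rfl fun a _ => ?_
      rw [Finset.mul_sum]
      refine Finset.sum_congr rfl fun b _ => ?_
      ring
    have h2 : star v ⬝ᵥ v = 1 := by
      have h3 : (star U * U) i i = star v ⬝ᵥ v := by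
        simp only [Matrix.mul_apply, dotProduct, Matrix.star_apply, Pi.star_apply, hv]
      rw [← h3, hUU, Matrix.one_apply_eq]
    have h4 := hC v
    rw [← h1, h2] at h4
    simpa using h4
  rw [traceNorm_hermitian hM, htr, Complex.re_sum]
  refine Finset.sum_le_sum fun i _ => ?_
  have h5 : (((star U * C * U) i i) * (hM.eigenvalues i : ℂ)).re
      ≤ ‖(star U * C * U) i i‖ * |hM.eigenvalues i| := by
    calc (((star U * C * U) i i) * (hM.eigenvalues i : ℂ)).re
        ≤ ‖((star U * C * U) i i) * (hM.eigenvalues i : ℂ)‖ := Complex.re_le_norm _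
      _ = ‖(star U * C * U) i i‖ * |hM.eigenvalues i| := by
          rw [norm_mul, Complex.norm_real, Real.norm_eq_abs]
  refine h5.trans ?_
  have h1 := hdiag i
  nlinarith [abs_nonneg (hM.eigenvalues i), norm_nonneg ((star U * C * U) i i)]

lemma sign_contraction {N : Matrix ι ι ℂ} (hN : N.IsHermitian) (v : ι → ℂ) :
    ‖star v ⬝ᵥ ((hN.eigenvectorUnitary : Matrix ι ι ℂ) *
        Matrix.diagonal (fun i => Complex.ofReal (if 0 ≤ hN.eigenvalues i then 1 else -1)) *
        star (hN.eigenvectorUnitary : Matrix ι ι ℂ)) *ᵥ v‖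
      ≤ (star v ⬝ᵥ v).re := by
  set U := (hN.eigenvectorUnitary : Matrix ι ι ℂ) with hU
  set s : ι → ℂ := fun i => Complex.ofReal (if 0 ≤ hN.eigenvalues i then 1 else -1) with hs
  have hUU' : U * star U = 1 := Matrix.mem_unitaryGroup_iff.mp hN.eigenvectorUnitary.2
  set w : ι → ℂ := star U *ᵥ v with hw
  have hsw : star w = star v ᵥ* U := by
    rw [hw, Matrix.star_mulVec]
    simp [Matrix.star_eq_conjTranspose]
  have h2 : star v ⬝ᵥ (U * Matrix.diagonal s * star U) *ᵥ v
      = star w ⬝ᵥ (Matrix.diagonal s *ᵥ w) := by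
    rw [← Matrix.mulVec_mulVec, ← Matrix.mulVec_mulVec, dotProduct_mulVec (star v) U, hsw]
  have h3 : star v ⬝ᵥ v = star w ⬝ᵥ w := by
    rw [hsw, hw, dotProduct_mulVec, Matrix.vecMul_vecMul, Matrix.star_eq_conjTranspose,
      ← Matrix.star_eq_conjTranspose, hUU', Matrix.vecMul_one]
  have h4 : star w ⬝ᵥ (Matrix.diagonal s *ᵥ w) = ∑ i, s i * ((Complex.normSq (w i) : ℂ)) := by
    simp only [dotProduct, Matrix.mulVec_diagonal, Pi.star_apply]
    refine Finset.sum_congr rfl fun i _ => ?_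
    rw [show (star (w i)) * (s i * w i) = s i * (star (w i) * w i) by ring]
    congr 1
    rw [Complex.star_def, mul_comm, Complex.mul_conj]
  have h5 : (star w ⬝ᵥ w).re = ∑ i, Complex.normSq (w i) := by
    simp only [dotProduct, Pi.star_apply, Complex.re_sum]
    refine Finset.sum_congr rfl fun i _ => ?_
    rw [Complex.star_def, mul_comm, Complex.mul_conj, Complex.ofReal_re]
  rw [h2, h3, h4, h5]
  refine (norm_sum_le _ _).trans ?_
  refine le_of_eq (Finset.sum_congr rfl fun i _ => ?_)
  rw [norm_mul, hs]
  simp only []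
  rw [Complex.norm_real, Complex.norm_real, Real.norm_eq_abs, Real.norm_eq_abs, abs_of_nonneg (Complex.normSq_nonneg _)]
  have : |if 0 ≤ hN.eigenvalues i then (1:ℝ) else -1| = 1 := by split_ifs <;> simp
  rw [this, one_mul]

lemma sign_trace_eq {N : Matrix ι ι ℂ} (hN : N.IsHermitian) :
    (((hN.eigenvectorUnitary : Matrix ι ι ℂ) *
        Matrix.diagonal (fun i => Complex.ofReal (if 0 ≤ hN.eigenvalues i then 1 else -1)) *
        star (hN.eigenvectorUnitary : Matrix ι ι ℂ)) * N).trace.re = traceNorm N := by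
  set U := (hN.eigenvectorUnitary : Matrix ι ι ℂ) with hU
  set s : ι → ℂ := fun i => Complex.ofReal (if 0 ≤ hN.eigenvalues i then 1 else -1) with hs
  have hUU : star U * U = 1 := Matrix.mem_unitaryGroup_iff'.mp hN.eigenvectorUnitary.2
  have h1 : (U * Matrix.diagonal s * star U) * N
      = U * (Matrix.diagonal s * Matrix.diagonal (RCLike.ofReal ∘ hN.eigenvalues)) * star U := by
    conv_lhs => rw [hN.spectral_theorem, Unitary.conjStarAlgAut_apply]
    exact my_sandwich hN _ _
  rw [h1, Matrix.trace_mul_cycle, ← Matrix.mul_assoc, hUU, Matrix.one_mul,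
    Matrix.diagonal_mul_diagonal, Matrix.trace_diagonal, Complex.re_sum,
    traceNorm_hermitian hN]
  refine Finset.sum_congr rfl fun i _ => ?_
  rw [hs]
  simp only []
  show ((Complex.ofReal (if 0 ≤ hN.eigenvalues i then 1 else -1)) * (Complex.ofReal (hN.eigenvalues i))).re = _
  rw [← Complex.ofReal_mul, Complex.ofReal_re]
  split_ifs with h
  · rw [one_mul, abs_of_nonneg h]
  · rw [neg_one_mul, abs_of_neg (lt_of_not_ge h)]

lemma traceNorm_add_le {A B : Matrix ι ι ℂ} (hA : A.IsHermitian) (hB : B.IsHermitian) :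
    traceNorm (A + B) ≤ traceNorm A + traceNorm B := by
  have hAB : (A + B).IsHermitian := hA.add hB
  set S := (hAB.eigenvectorUnitary : Matrix ι ι ℂ) *
      Matrix.diagonal (fun i => Complex.ofReal (if 0 ≤ hAB.eigenvalues i then 1 else -1)) *
      star (hAB.eigenvectorUnitary : Matrix ι ι ℂ) with hS
  have hC : ∀ v : ι → ℂ, ‖star v ⬝ᵥ S *ᵥ v‖ ≤ (star v ⬝ᵥ v).re :=
    fun v => sign_contraction hAB v
  have h1 := re_trace_mul_le hA S hC
  have h2 := re_trace_mul_le hB S hC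
  have h3 := sign_trace_eq hAB
  have h4 : (S * (A + B)).trace.re = (S * A).trace.re + (S * B).trace.re := by
    rw [Matrix.mul_add, Matrix.trace_add, Complex.add_re]
  linarith

lemma herm_sum {κ : Type*} (S : Finset κ) (f : κ → Matrix ι ι ℂ)
    (hf : ∀ x ∈ S, (f x).IsHermitian) : (∑ x ∈ S, f x).IsHermitian := by
  show (∑ x ∈ S, f x)ᴴ = ∑ x ∈ S, f x
  rw [Matrix.conjTranspose_sum]
  exact Finset.sum_congr rfl hf

lemma traceNorm_sum_le {κ : Type*} (S : Finset κ) (f : κ → Matrix ι ι ℂ)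
    (hf : ∀ x ∈ S, (f x).IsHermitian) :
    traceNorm (∑ x ∈ S, f x) ≤ ∑ x ∈ S, traceNorm (f x) := by
  classical
  induction S using Finset.induction with
  | empty => simp [traceNorm_zero]
  | @insert a S ha ih =>
    rw [Finset.sum_insert ha, Finset.sum_insert ha]
    refine (traceNorm_add_le (hf _ (Finset.mem_insert_self _ _))
      (herm_sum S f fun x hx => hf x (Finset.mem_insert_of_mem hx))).trans ?_
    exact add_le_add le_rfl (ih fun x hx => hf x (Finset.mem_insert_of_mem hx))

lemma herm_real_smul (r : ℝ) {A : Matrix ι ι ℂ} (hA : A.IsHermitian) :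
    ((r : ℂ) • A).IsHermitian := by
  show ((r : ℂ) • A)ᴴ = (r : ℂ) • A
  rw [Matrix.conjTranspose_smul, hA.eq, Complex.star_def, Complex.conj_ofReal]

end herm

section kron
variable {X β : Type*} [Fintype X] [DecidableEq X] [Fintype β] [DecidableEq β]

lemma conjTranspose_kron (A : Matrix X X ℂ) (B : Matrix β β ℂ) :
    (A ⊗ₖ B)ᴴ = Aᴴ ⊗ₖ Bᴴ := by
  ext ⟨i, j⟩ ⟨k, l⟩
  simp [Matrix.conjTranspose_apply, Matrix.kroneckerMap_apply, mul_comm]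

lemma herm_kron {A : Matrix X X ℂ} {B : Matrix β β ℂ} (hA : A.IsHermitian) (hB : B.IsHermitian) :
    (A ⊗ₖ B).IsHermitian := by
  show (A ⊗ₖ B)ᴴ = A ⊗ₖ B
  rw [conjTranspose_kron, hA.eq, hB.eq]

lemma kron_sub_right (A : Matrix X X ℂ) (B C : Matrix β β ℂ) :
    A ⊗ₖ (B - C) = A ⊗ₖ B - A ⊗ₖ C := by
  ext ⟨i, j⟩ ⟨k, l⟩
  simp [Matrix.kroneckerMap_apply, mul_sub]

lemma psd_kron {A : Matrix X X ℂ} {B : Matrix β β ℂ} (hA : A.PosSemidef) (hB : B.PosSemidef) :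
    (A ⊗ₖ B).PosSemidef := by
  exact hA.kronecker hB

lemma block_mul (S : Finset X) (A B : X → Matrix β β ℂ) :
    (∑ x ∈ S, Matrix.single x x (1:ℂ) ⊗ₖ A x) *
      (∑ x ∈ S, Matrix.single x x (1:ℂ) ⊗ₖ B x) =
    ∑ x ∈ S, Matrix.single x x (1:ℂ) ⊗ₖ (A x * B x) := by
  rw [Finset.sum_mul_sum]
  refine Finset.sum_congr rfl fun x hx => ?_
  rw [Finset.sum_eq_single_of_mem x hx (fun y _ hyx => by
    rw [← Matrix.mul_kronecker_mul, Matrix.single_mul_single_of_ne (h := Ne.symm hyx),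
      Matrix.zero_kronecker])]
  rw [← Matrix.mul_kronecker_mul, Matrix.single_mul_single_same, one_mul]

lemma psd_sum {ι : Type*} [Fintype ι] [DecidableEq ι] {κ : Type*} (S : Finset κ)
    (f : κ → Matrix ι ι ℂ) (hf : ∀ x ∈ S, (f x).PosSemidef) :
    (∑ x ∈ S, f x).PosSemidef := by
  classical
  induction S using Finset.induction with
  | empty => simpa using Matrix.PosSemidef.zero
  | @insert a S hx ih =>
    rw [Finset.sum_insert hx]
    exact (hf _ (Finset.mem_insert_self _ _)).add
      (ih fun x hxS => hf x (Finset.mem_insert_of_mem hxS))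

lemma stdE_conjT (x : X) :
    (Matrix.single x x (1:ℂ))ᴴ = Matrix.single x x 1 := by
  ext i j
  simp [Matrix.conjTranspose_apply, Matrix.single, apply_ite (star : ℂ → ℂ), and_comm]

lemma traceNorm_block (S : Finset X) (M : X → Matrix β β ℂ) :
    traceNorm (∑ x ∈ S, Matrix.single x x (1:ℂ) ⊗ₖ M x) = ∑ x ∈ S, traceNorm (M x) := by
  set Q := ∑ x ∈ S, Matrix.single x x (1:ℂ) ⊗ₖ
    (CFC.sqrt ((M x)ᴴ * M x)) with hQ
  have hE : ∀ x : X, (Matrix.single x x (1:ℂ)).PosSemidef := by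
    intro x
    have := Matrix.posSemidef_conjTranspose_mul_self (Matrix.single x x (1:ℂ))
    rwa [stdE_conjT, Matrix.single_mul_single_same, one_mul] at this
  have hQpsd : Q.PosSemidef := psd_sum S _ fun x _ =>
    psd_kron (hE x) (sqrt_psd (M x))
  have hsq : Q ^ 2 = (∑ x ∈ S, Matrix.single x x (1:ℂ) ⊗ₖ M x)ᴴ *
      (∑ x ∈ S, Matrix.single x x (1:ℂ) ⊗ₖ M x) := by
    have hconj : (∑ x ∈ S, Matrix.single x x (1:ℂ) ⊗ₖ M x)ᴴ
        = ∑ x ∈ S, Matrix.single x x (1:ℂ) ⊗ₖ (M x)ᴴ := by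
      rw [Matrix.conjTranspose_sum]
      refine Finset.sum_congr rfl fun x _ => ?_
      rw [conjTranspose_kron, stdE_conjT]
    rw [pow_two, hQ, block_mul, hconj, block_mul]
    refine Finset.sum_congr rfl fun x _ => ?_
    rw [CFC.sqrt_mul_sqrt_self _ (Matrix.posSemidef_conjTranspose_mul_self (M x)).nonneg]
  rw [traceNorm_eq_of_sq hQpsd hsq, hQ, Matrix.trace_sum, Complex.re_sum]
  refine Finset.sum_congr rfl fun x _ => ?_
  rw [Matrix.trace_kronecker]
  have ht : (Matrix.single x x (1:ℂ)).trace = 1 := by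
    simp [Matrix.trace, Matrix.diag, Matrix.single]
  rw [ht, one_mul]
  exact (traceNorm_eq_sqrt _).symm

lemma traceNorm_kron_left {τ : Matrix X X ℂ} (hτ : τ.PosSemidef) (htr : τ.trace = 1)
    (N : Matrix β β ℂ) : traceNorm (τ ⊗ₖ N) = traceNorm N := by
  set Q := τ ⊗ₖ (CFC.sqrt (Nᴴ * N)) with hQ
  have hQpsd : Q.PosSemidef :=
    psd_kron hτ (sqrt_psd N)
  have hsq : Q ^ 2 = (τ ⊗ₖ N)ᴴ * (τ ⊗ₖ N) := by
    rw [pow_two, hQ, ← Matrix.mul_kronecker_mul, conjTranspose_kron, ← Matrix.mul_kronecker_mul,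
      CFC.sqrt_mul_sqrt_self _ (Matrix.posSemidef_conjTranspose_mul_self N).nonneg, hτ.1]
  rw [traceNorm_eq_of_sq hQpsd hsq, hQ, Matrix.trace_kronecker, htr, one_mul]
  exact (traceNorm_eq_sqrt _).symm

end kron

theorem stmt18 {X β : Type*} [Fintype X] [DecidableEq X] [Fintype β] [DecidableEq β]
    (p ptil : X → ℝ)
    (hp : (∀ x, 0 ≤ p x) ∧ ∑ x, p x = 1) (hptil : (∀ x, 0 ≤ ptil x) ∧ ∑ x, ptil x = 1)
    (ρ ρtil : X → Matrix β β ℂ)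
    (hρ : ∀ x, (ρ x).PosSemidef ∧ (ρ x).trace = 1)
    (hρtil : ∀ x, (ρtil x).PosSemidef ∧ (ρtil x).trace = 1)
    (lam : X → Prop) [DecidablePred lam]
    (τ : Matrix X X ℂ) (hτ : τ.PosSemidef ∧ τ.trace = 1) :
    (1 / 2 : ℝ) * traceNorm
        ((∑ x ∈ Finset.univ.filter lam, (p x : ℂ) • (Matrix.single x x 1 ⊗ₖ ρ x)) -
          τ ⊗ₖ (∑ x ∈ Finset.univ.filter lam, (p x : ℂ) • ρ x))
      ≤ 5 * traceDist
            (∑ x : X, (p x : ℂ) • (Matrix.single x x 1 ⊗ₖ ρ x))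
            (∑ x : X, (ptil x : ℂ) • (Matrix.single x x 1 ⊗ₖ ρtil x)) +
        (1 / 2 : ℝ) * traceNorm
          ((∑ x ∈ Finset.univ.filter lam, (ptil x : ℂ) • (Matrix.single x x 1 ⊗ₖ ρtil x)) -
            τ ⊗ₖ (∑ x ∈ Finset.univ.filter lam, (ptil x : ℂ) • ρtil x)) := by
  set Λ := Finset.univ.filter lam with hΛ
  set M : X → Matrix β β ℂ := fun x => (p x : ℂ) • ρ x - (ptil x : ℂ) • ρtil x with hM
  -- Hermitian facts
  have hρh : ∀ x, (ρ x).IsHermitian := fun x => (hρ x).1.1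
  have hρth : ∀ x, (ρtil x).IsHermitian := fun x => (hρtil x).1.1
  have hMh : ∀ x, (M x).IsHermitian := fun x =>
    (herm_real_smul (p x) (hρh x)).sub (herm_real_smul (ptil x) (hρth x))
  -- rewrite scalar-kronecker terms
  have hsk : ∀ (q : X → ℝ) (σ : X → Matrix β β ℂ) (S : Finset X),
      ∑ x ∈ S, (q x : ℂ) • (Matrix.single x x 1 ⊗ₖ σ x)
        = ∑ x ∈ S, Matrix.single x x (1:ℂ) ⊗ₖ ((q x : ℂ) • σ x) := by
    intro q σ S
    refine Finset.sum_congr rfl fun x _ => ?_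
    rw [Matrix.kronecker_smul]
  -- difference of block sums
  have hdiff : ∀ (S : Finset X),
      (∑ x ∈ S, (p x : ℂ) • (Matrix.single x x 1 ⊗ₖ ρ x))
        - (∑ x ∈ S, (ptil x : ℂ) • (Matrix.single x x 1 ⊗ₖ ρtil x))
      = ∑ x ∈ S, Matrix.single x x (1:ℂ) ⊗ₖ M x := by
    intro S
    rw [hsk, hsk, ← Finset.sum_sub_distrib]
    refine Finset.sum_congr rfl fun x _ => ?_
    rw [← kron_sub_right]
  -- the full difference
  have hF : (∑ x : X, (p x : ℂ) • (Matrix.single x x 1 ⊗ₖ ρ x))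
      - (∑ x : X, (ptil x : ℂ) • (Matrix.single x x 1 ⊗ₖ ρtil x))
      = ∑ x : X, Matrix.single x x (1:ℂ) ⊗ₖ M x := hdiff Finset.univ
  -- abbreviations
  set T2 : Matrix (X × β) (X × β) ℂ :=
    (∑ x ∈ Λ, (ptil x : ℂ) • (Matrix.single x x 1 ⊗ₖ ρtil x))
      - τ ⊗ₖ (∑ x ∈ Λ, (ptil x : ℂ) • ρtil x) with hT2
  set T1 : Matrix (X × β) (X × β) ℂ := ∑ x ∈ Λ, Matrix.single x x (1:ℂ) ⊗ₖ M x with hT1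
  set T3 : Matrix (X × β) (X × β) ℂ := τ ⊗ₖ (∑ x ∈ Λ, (-(M x))) with hT3
  -- split
  have hsplit : (∑ x ∈ Λ, (p x : ℂ) • (Matrix.single x x 1 ⊗ₖ ρ x))
      - τ ⊗ₖ (∑ x ∈ Λ, (p x : ℂ) • ρ x) = T1 + T2 + T3 := by
    have e0 : (∑ x ∈ Λ, (-(M x))) = (∑ x ∈ Λ, (ptil x : ℂ) • ρtil x)
        - ∑ x ∈ Λ, (p x : ℂ) • ρ x := by
      rw [← Finset.sum_sub_distrib]
      refine Finset.sum_congr rfl fun x _ => ?_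
      rw [hM]
      simp only [neg_sub]
    have e3 : T3 = τ ⊗ₖ (∑ x ∈ Λ, (ptil x : ℂ) • ρtil x)
        - τ ⊗ₖ (∑ x ∈ Λ, (p x : ℂ) • ρ x) := by
      rw [hT3, e0, kron_sub_right]
    have e1 : T1 = (∑ x ∈ Λ, (p x : ℂ) • (Matrix.single x x 1 ⊗ₖ ρ x))
        - (∑ x ∈ Λ, (ptil x : ℂ) • (Matrix.single x x 1 ⊗ₖ ρtil x)) := (hdiff Λ).symm
    rw [e1, hT2, e3]
    abel
  -- Hermitian facts for the three terms
  have hEh : ∀ x : X, (Matrix.single x x (1:ℂ)).IsHermitian := fun x => stdE_conjT x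
  have hT1h : T1.IsHermitian := herm_sum _ _ fun x _ => herm_kron (hEh x) (hMh x)
  have hT2h : T2.IsHermitian := by
    refine Matrix.IsHermitian.sub (herm_sum _ _ fun x _ => ?_) (herm_kron hτ.1.1 ?_)
    · exact herm_real_smul (ptil x) (herm_kron (hEh x) (hρth x))
    · exact herm_sum _ _ fun x _ => herm_real_smul (ptil x) (hρth x)
  have hT3h : T3.IsHermitian :=
    herm_kron hτ.1.1 (herm_sum _ _ fun x _ => (hMh x).neg)
  -- triangle
  have htri : traceNorm (T1 + T2 + T3) ≤ traceNorm T1 + traceNorm T2 + traceNorm T3 := by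
    refine (traceNorm_add_le (hT1h.add hT2h) hT3h).trans ?_
    have := traceNorm_add_le hT1h hT2h
    linarith
  -- bounds on T1 and T3
  have hsum_le : ∑ x ∈ Λ, traceNorm (M x) ≤ ∑ x : X, traceNorm (M x) :=
    Finset.sum_le_sum_of_subset_of_nonneg (Finset.subset_univ Λ)
      (fun x _ _ => traceNorm_nonneg (M x))
  have hT1b : traceNorm T1 ≤ ∑ x : X, traceNorm (M x) := by
    rw [hT1, traceNorm_block]
    exact hsum_le
  have hT3b : traceNorm T3 ≤ ∑ x : X, traceNorm (M x) := by
    rw [hT3, traceNorm_kron_left hτ.1 hτ.2]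
    refine ((traceNorm_sum_le Λ _ fun x _ => (hMh x).neg).trans ?_)
    refine le_trans (le_of_eq (Finset.sum_congr rfl fun x _ => traceNorm_neg (M x))) hsum_le
  -- identify the trace distance
  have hTD : traceDist
      (∑ x : X, (p x : ℂ) • (Matrix.single x x 1 ⊗ₖ ρ x))
      (∑ x : X, (ptil x : ℂ) • (Matrix.single x x 1 ⊗ₖ ρtil x))
      = (1/2 : ℝ) * (∑ x : X, traceNorm (M x)) := by
    rw [traceDist, hF, traceNorm_block]
  have hFnn : 0 ≤ ∑ x : X, traceNorm (M x) :=
    Finset.sum_nonneg fun x _ => traceNorm_nonneg (M x)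
  rw [hsplit, hTD]
  have := (mul_le_mul_of_nonneg_left htri (by norm_num : (0:ℝ) ≤ 1/2))
  linarith
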